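/- Under the local assumptions, let {x_k} be the LMMSS sequence with unit steps: x_{k+1} = x_k + d_k, where d_k solves (J(x_k)ᵀJ(x_k) + λ_k LᵀL)d_k = −J(x_k)ᵀF(x_k) with λ_k = ‖F(x_k)‖² (and d_k = 0 if F(x_k) = 0). If x₀ ∈ B(x*, r), where r = min{ δ/(2 + 4c₃), 1/(2c₅) }, then x_k ∈ B(x*, δ) for every k ≥ 0. -/

import Mathlib

open Matrix Metric
open scoped RealInnerProductSpace

set_option maxHeartbeats 1000000

/-- The continuous linear map on Euclidean spaces induced by a real matrix. -/
noncomputable def matCLM {m n : ℕ} (A : Matrix (Fin m) (Fin n) ℝ) :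
    EuclideanSpace ℝ (Fin n) →L[ℝ] EuclideanSpace ℝ (Fin m) :=
  LinearMap.toContinuousLinearMap (Matrix.toEuclideanLin A)

/-- `c₃ = (1/(c₂√γ))·√(c₁² + c₂²(nL² + c_F²))`, where `nL = ‖L‖` (spectral norm). -/
noncomputable def lmC3 (c1 c2 cF γ nL : ℝ) : ℝ :=
  (1 / (c2 * Real.sqrt γ)) * Real.sqrt (c1 ^ 2 + c2 ^ 2 * (nL ^ 2 + cF ^ 2))

/-- `c₄ = √(c₁² + c_F²·nL²)`, where `nL = ‖L‖` (spectral norm). -/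
noncomputable def lmC4 (c1 cF nL : ℝ) : ℝ :=
  Real.sqrt (c1 ^ 2 + cF ^ 2 * nL ^ 2)

/-- `c₅ = (c₁c₃² + c₄)/c₂`. -/
noncomputable def lmC5 (c1 c2 cF γ nL : ℝ) : ℝ :=
  (c1 * (lmC3 c1 c2 cF γ nL) ^ 2 + lmC4 c1 cF nL) / c2

lemma matCLM_apply {m n : ℕ} (A : Matrix (Fin m) (Fin n) ℝ) (v : EuclideanSpace ℝ (Fin n)) :
    matCLM A v = Matrix.toEuclideanLin A v := rfl

lemma matCLM_add {m n : ℕ} (A B : Matrix (Fin m) (Fin n) ℝ) (v : EuclideanSpace ℝ (Fin n)) :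
    matCLM (A + B) v = matCLM A v + matCLM B v := by
  simp [matCLM_apply, map_add]

lemma matCLM_smul {m n : ℕ} (c : ℝ) (A : Matrix (Fin m) (Fin n) ℝ) (v : EuclideanSpace ℝ (Fin n)) :
    matCLM (c • A) v = c • matCLM A v := by
  simp [matCLM_apply, _root_.map_smul]

lemma matCLM_mul {m n k : ℕ} (A : Matrix (Fin m) (Fin k) ℝ) (B : Matrix (Fin k) (Fin n) ℝ)
    (v : EuclideanSpace ℝ (Fin n)) :
    matCLM (A * B) v = matCLM A (matCLM B v) := by
  simp [matCLM_apply, Matrix.toEuclideanLin_apply, Matrix.mulVec_mulVec]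

lemma matCLM_adjoint {m n : ℕ} (A : Matrix (Fin m) (Fin n) ℝ)
    (u : EuclideanSpace ℝ (Fin m)) (v : EuclideanSpace ℝ (Fin n)) :
    ⟪matCLM Aᵀ u, v⟫ = ⟪u, matCLM A v⟫ := by
  have h : Aᵀ = Aᴴ := (Matrix.conjTranspose_eq_transpose_of_trivial A).symm
  rw [matCLM_apply, h, Matrix.toEuclideanLin_conjTranspose_eq_adjoint,
    LinearMap.adjoint_inner_left]
  rfl

/-- Consequences of the LM normal equations: `d` minimizes the regularized quadratic,
and `‖J d‖ ≤ ‖F‖`. -/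
lemma lm_min {m n p : ℕ} (Jm : Matrix (Fin m) (Fin n) ℝ) (L : Matrix (Fin p) (Fin n) ℝ)
    (Fv : EuclideanSpace ℝ (Fin m)) (dvec dbar : EuclideanSpace ℝ (Fin n)) (lam : ℝ)
    (hlam : 0 ≤ lam)
    (hne : matCLM (Jmᵀ * Jm + lam • (Lᵀ * L)) dvec = -(matCLM Jmᵀ Fv)) :
    (‖Fv + matCLM Jm dvec‖ ^ 2 + lam * ‖matCLM L dvec‖ ^ 2 ≤
      ‖Fv + matCLM Jm dbar‖ ^ 2 + lam * ‖matCLM L dbar‖ ^ 2) ∧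
    ‖matCLM Jm dvec‖ ≤ ‖Fv‖ := by
  set Jc := matCLM Jm with hJc
  set Lc := matCLM L with hLc
  have key : ∀ e : EuclideanSpace ℝ (Fin n),
      ⟪Jc dvec, Jc e⟫ + lam * ⟪Lc dvec, Lc e⟫ + ⟪Fv, Jc e⟫ = 0 := by
    intro e
    have h1 : ⟪matCLM (Jmᵀ * Jm + lam • (Lᵀ * L)) dvec, e⟫ = ⟪-(matCLM Jmᵀ Fv), e⟫ := by
      rw [hne]
    rw [matCLM_add, matCLM_smul, matCLM_mul, matCLM_mul, inner_add_left,
      real_inner_smul_left, matCLM_adjoint, matCLM_adjoint, inner_neg_left,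
      matCLM_adjoint] at h1
    linarith [h1]
  constructor
  · set e := dbar - dvec with he
    have hJe : Jc dbar = (Jc dvec) + Jc e := by rw [he, map_sub]; abel
    have hLe : Lc dbar = (Lc dvec) + Lc e := by rw [he, map_sub]; abel
    have h2 : ‖Fv + Jc dbar‖ ^ 2 =
        ‖Fv + Jc dvec‖ ^ 2 + 2 * ⟪Fv + Jc dvec, Jc e⟫ + ‖Jc e‖ ^ 2 := by
      rw [hJe, ← add_assoc, norm_add_sq_real]
    have h3 : ‖Lc dbar‖ ^ 2 = ‖Lc dvec‖ ^ 2 + 2 * ⟪Lc dvec, Lc e⟫ + ‖Lc e‖ ^ 2 := by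
      rw [hLe, norm_add_sq_real]
    have h4 : ⟪Fv + Jc dvec, Jc e⟫ = ⟪Fv, Jc e⟫ + ⟪Jc dvec, Jc e⟫ := inner_add_left _ _ _
    have hk := key e
    have h3' : lam * ‖Lc dbar‖ ^ 2 =
        lam * ‖Lc dvec‖ ^ 2 + 2 * (lam * ⟪Lc dvec, Lc e⟫) + lam * ‖Lc e‖ ^ 2 := by
      rw [h3]; ring
    linarith [sq_nonneg ‖Jc e‖, mul_nonneg hlam (sq_nonneg ‖Lc e‖)]
  · have hk := key dvec
    rw [real_inner_self_eq_norm_sq, real_inner_self_eq_norm_sq] at hk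
    have habs := abs_real_inner_le_norm Fv (Jc dvec)
    have h0 : 0 ≤ lam * ‖Lc dvec‖ ^ 2 := mul_nonneg hlam (sq_nonneg _)
    by_contra hcon
    push_neg at hcon
    nlinarith [norm_nonneg (Jc dvec), norm_nonneg Fv, abs_le.mp habs]

/-- Pure real arithmetic at the heart of the LM step estimates. -/
lemma lm_arith (c1 c2 cF γ nL D lam a jd ld ndy : ℝ)
    (hc1p : 0 < c1) (hc2p : 0 < c2) (hcFp : 0 < cF) (hγ : 0 < γ)
    (hD : 0 < D) (ha : 0 ≤ a) (hjd : 0 ≤ jd) (hndy : 0 ≤ ndy)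
    (hlam_lb : c2 ^ 2 * D ^ 2 ≤ lam) (hlam_ub : lam ≤ cF ^ 2 * D ^ 2)
    (hmin : a ^ 2 + lam * ld ^ 2 ≤ (c1 * D ^ 2) ^ 2 + lam * (nL * D) ^ 2)
    (hjdF : jd ≤ cF * D)
    (hcomp : jd ^ 2 + ld ^ 2 ≥ γ * ndy ^ 2) :
    ndy ≤ lmC3 c1 c2 cF γ nL * D ∧ a ≤ lmC4 c1 cF nL * D ^ 2 ∧
      c1 * ndy ^ 2 + a ≤ (c1 * lmC3 c1 c2 cF γ nL ^ 2 + lmC4 c1 cF nL) * D ^ 2 := by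
  have hlamnn : 0 ≤ lam := le_trans (by positivity) hlam_lb
  have hc3nn : 0 ≤ lmC3 c1 c2 cF γ nL := by rw [lmC3]; positivity
  have hQnn : (0:ℝ) ≤ c1 ^ 2 + c2 ^ 2 * (nL ^ 2 + cF ^ 2) := by positivity
  have hc3sq : lmC3 c1 c2 cF γ nL ^ 2 = (c1 ^ 2 + c2 ^ 2 * (nL ^ 2 + cF ^ 2)) / (c2 ^ 2 * γ) := by
    have h1 : Real.sqrt (c1 ^ 2 + c2 ^ 2 * (nL ^ 2 + cF ^ 2)) ^ 2 =
        c1 ^ 2 + c2 ^ 2 * (nL ^ 2 + cF ^ 2) := Real.sq_sqrt hQnn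
    have h2 : Real.sqrt γ ^ 2 = γ := Real.sq_sqrt hγ.le
    rw [lmC3, mul_pow, div_pow, one_pow, mul_pow, h1, h2]; ring
  have hc4nn : 0 ≤ lmC4 c1 cF nL := Real.sqrt_nonneg _
  have hc4sq : lmC4 c1 cF nL ^ 2 = c1 ^ 2 + cF ^ 2 * nL ^ 2 := Real.sq_sqrt (by positivity)
  have e1 : (c1 * D ^ 2) ^ 2 = c1 ^ 2 * D ^ 4 := by ring
  have e2 : lam * (nL * D) ^ 2 = lam * (nL ^ 2 * D ^ 2) := by ring
  have hA : a ^ 2 ≤ c1 ^ 2 * D ^ 4 + lam * (nL ^ 2 * D ^ 2) := by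
    have := mul_nonneg hlamnn (sq_nonneg ld); linarith
  have hB : lam * ld ^ 2 ≤ c1 ^ 2 * D ^ 4 + lam * (nL ^ 2 * D ^ 2) := by
    have := sq_nonneg a; linarith
  have hjd2 : jd ^ 2 ≤ cF ^ 2 * D ^ 2 := by
    have h := mul_le_mul hjdF hjdF hjd (by positivity : (0:ℝ) ≤ cF * D)
    have e : (cF * D) * (cF * D) = cF ^ 2 * D ^ 2 := by ring
    have e' : jd * jd = jd ^ 2 := by ring
    linarith [e ▸ e' ▸ h]
  have hld2 : c2 ^ 2 * ld ^ 2 ≤ c1 ^ 2 * D ^ 2 + c2 ^ 2 * (nL ^ 2 * D ^ 2) := by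
    rcases le_or_gt (ld ^ 2) (nL ^ 2 * D ^ 2) with h | h
    · have h' := mul_le_mul_of_nonneg_left h (sq_nonneg c2)
      have : (0:ℝ) < c1 ^ 2 * D ^ 2 := by positivity
      linarith
    · have h4 : c2 ^ 2 * D ^ 2 * (ld ^ 2 - nL ^ 2 * D ^ 2) ≤ lam * (ld ^ 2 - nL ^ 2 * D ^ 2) :=
        mul_le_mul_of_nonneg_right hlam_lb (by linarith)
      have h5 : lam * (ld ^ 2 - nL ^ 2 * D ^ 2) ≤ c1 ^ 2 * D ^ 4 := by
        have e : lam * (ld ^ 2 - nL ^ 2 * D ^ 2) = lam * ld ^ 2 - lam * (nL ^ 2 * D ^ 2) := by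
          ring
        linarith
      have h6 : c2 ^ 2 * (ld ^ 2 - nL ^ 2 * D ^ 2) * D ^ 2 ≤ c1 ^ 2 * D ^ 2 * D ^ 2 := by
        have e : c2 ^ 2 * (ld ^ 2 - nL ^ 2 * D ^ 2) * D ^ 2 =
            c2 ^ 2 * D ^ 2 * (ld ^ 2 - nL ^ 2 * D ^ 2) := by ring
        have e' : c1 ^ 2 * D ^ 2 * D ^ 2 = c1 ^ 2 * D ^ 4 := by ring
        linarith
      have h7 := (mul_le_mul_iff_of_pos_right (by positivity : (0:ℝ) < D ^ 2)).mp h6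
      linarith
  have hndyle : ndy ≤ lmC3 c1 c2 cF γ nL * D := by
    have hsq : ndy ^ 2 ≤ (lmC3 c1 c2 cF γ nL * D) ^ 2 := by
      rw [mul_pow, hc3sq, div_mul_eq_mul_div, le_div_iff₀ (by positivity : (0:ℝ) < c2 ^ 2 * γ)]
      have hcomp' : γ * ndy ^ 2 ≤ jd ^ 2 + ld ^ 2 := hcomp
      have h9 := mul_le_mul_of_nonneg_left hcomp' (sq_nonneg c2)
      have h10 := mul_le_mul_of_nonneg_left hjd2 (sq_nonneg c2)
      nlinarith
    have := Real.sqrt_le_sqrt hsq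
    rwa [Real.sqrt_sq hndy, Real.sqrt_sq (by positivity)] at this
  have haD : a ≤ lmC4 c1 cF nL * D ^ 2 := by
    have hsq : a ^ 2 ≤ (lmC4 c1 cF nL * D ^ 2) ^ 2 := by
      rw [mul_pow, hc4sq]
      have h11 := mul_le_mul_of_nonneg_right hlam_ub (by positivity : (0:ℝ) ≤ nL ^ 2 * D ^ 2)
      nlinarith
    have := Real.sqrt_le_sqrt hsq
    rwa [Real.sqrt_sq ha, Real.sqrt_sq (by positivity)] at this
  refine ⟨hndyle, haD, ?_⟩
  have h8 : ndy ^ 2 ≤ lmC3 c1 c2 cF γ nL ^ 2 * D ^ 2 := by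
    have h := mul_le_mul hndyle hndyle hndy (mul_nonneg hc3nn hD.le)
    nlinarith
  have h12 := mul_le_mul_of_nonneg_left h8 hc1p.le
  nlinarith

/-- Single LM step estimates: step length and new residual. -/
lemma lm_step {n m p : ℕ}
    (F : EuclideanSpace ℝ (Fin n) → EuclideanSpace ℝ (Fin m))
    (J : EuclideanSpace ℝ (Fin n) → Matrix (Fin m) (Fin n) ℝ)
    (xstar : EuclideanSpace ℝ (Fin n)) (hxstar : F xstar = 0)
    (δ c1 cF c2 : ℝ) (hδ0 : 0 < δ) (hc1pos : 0 < c1) (hcFpos : 0 < cF) (hc2pos : 0 < c2)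
    (hc1 : ∀ x ∈ closedBall xstar (2 * δ), ∀ y ∈ closedBall xstar (2 * δ),
      ‖matCLM (J y) (x - y) - (F x - F y)‖ ≤ c1 * ‖x - y‖ ^ 2)
    (hcF : ∀ x ∈ closedBall xstar (2 * δ), ∀ y ∈ closedBall xstar (2 * δ),
      ‖F x - F y‖ ≤ cF * ‖x - y‖)
    (hc2 : ∀ x ∈ closedBall xstar (2 * δ),
      c2 * infDist x {y | F y = 0} ≤ ‖F x‖)
    (L : Matrix (Fin p) (Fin n) ℝ) (γ : ℝ) (hγ : 0 < γ)
    (hcomp : ∀ (x : EuclideanSpace ℝ (Fin n)) (v : EuclideanSpace ℝ (Fin n)),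
      ‖matCLM (J x) v‖ ^ 2 + ‖matCLM L v‖ ^ 2 ≥ γ * ‖v‖ ^ 2)
    (hSclosed : IsClosed {z : EuclideanSpace ℝ (Fin n) | F z = 0})
    (y dy : EuclideanSpace ℝ (Fin n))
    (hy : ‖y - xstar‖ ≤ δ) (hFy : F y ≠ 0)
    (hdy : matCLM ((J y)ᵀ * J y + ‖F y‖ ^ 2 • (Lᵀ * L)) dy = -(matCLM (J y)ᵀ (F y))) :
    ‖dy‖ ≤ lmC3 c1 c2 cF γ ‖matCLM L‖ * infDist y {z | F z = 0} ∧
    (y + dy ∈ closedBall xstar (2 * δ) →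
      infDist (y + dy) {z | F z = 0} ≤
        lmC5 c1 c2 cF γ ‖matCLM L‖ * (infDist y {z | F z = 0}) ^ 2) := by
  have hy2δ : y ∈ closedBall xstar (2 * δ) := by
    rw [mem_closedBall_iff_norm]; linarith
  have hSne : Set.Nonempty {z : EuclideanSpace ℝ (Fin n) | F z = 0} := ⟨xstar, hxstar⟩
  obtain ⟨xb, hxbS, hxbd⟩ := hSclosed.exists_infDist_eq_dist hSne y
  have hFxb : F xb = 0 := hxbS
  set D := infDist y {z : EuclideanSpace ℝ (Fin n) | F z = 0} with hD
  have hDxb : ‖y - xb‖ = D := by rw [hxbd, dist_eq_norm]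
  have hDnn : 0 ≤ D := infDist_nonneg
  have hDle : D ≤ ‖y - xstar‖ := by
    rw [hxbd]
    exact le_trans (le_of_eq hxbd.symm) (le_trans (le_of_eq hD) (by rw [← dist_eq_norm]; exact infDist_le_dist_of_mem hxstar))
  have hxb2δ : xb ∈ closedBall xstar (2 * δ) := by
    rw [mem_closedBall_iff_norm]
    calc ‖xb - xstar‖ ≤ ‖xb - y‖ + ‖y - xstar‖ := norm_sub_le_norm_sub_add_norm_sub _ _ _
    _ ≤ D + δ := by rw [norm_sub_rev, hDxb]; linarith
    _ ≤ 2 * δ := by linarith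
  have hFyD : ‖F y‖ ≤ cF * D := by
    have := hcF y hy2δ xb hxb2δ
    rwa [hFxb, sub_zero, hDxb] at this
  have hFypos : 0 < ‖F y‖ := norm_pos_iff.mpr hFy
  have hDpos : 0 < D := by nlinarith
  have hc2D : c2 * D ≤ ‖F y‖ := hc2 y hy2δ
  have hlam_lb : c2 ^ 2 * D ^ 2 ≤ ‖F y‖ ^ 2 := by
    have h := mul_le_mul hc2D hc2D (by positivity) (norm_nonneg (F y))
    nlinarith
  have hlam_ub : ‖F y‖ ^ 2 ≤ cF ^ 2 * D ^ 2 := by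
    have h := mul_le_mul hFyD hFyD (norm_nonneg (F y)) (by positivity)
    nlinarith
  set dbar := xb - y with hdbar
  have hdbarn : ‖dbar‖ = D := by rw [hdbar, norm_sub_rev, hDxb]
  have hFJdbar : ‖F y + matCLM (J y) dbar‖ ≤ c1 * D ^ 2 := by
    have h := hc1 xb hxb2δ y hy2δ
    rw [hFxb, zero_sub, sub_neg_eq_add, norm_sub_rev xb y, hDxb] at h
    rwa [add_comm] at h
  obtain ⟨hmin, hJd⟩ := lm_min (J y) L (F y) dy dbar (‖F y‖ ^ 2) (sq_nonneg _) hdy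
  have hLdbar : ‖matCLM L dbar‖ ≤ ‖matCLM L‖ * D := by
    have h := (matCLM L).le_opNorm dbar
    rwa [hdbarn] at h
  have hsq1 : ‖F y + matCLM (J y) dbar‖ ^ 2 ≤ (c1 * D ^ 2) ^ 2 :=
    pow_le_pow_left₀ (norm_nonneg _) hFJdbar 2
  have hsq2 : ‖matCLM L dbar‖ ^ 2 ≤ (‖matCLM L‖ * D) ^ 2 :=
    pow_le_pow_left₀ (norm_nonneg _) hLdbar 2
  have hsq3 : ‖F y‖ ^ 2 * ‖matCLM L dbar‖ ^ 2 ≤ ‖F y‖ ^ 2 * (‖matCLM L‖ * D) ^ 2 :=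
    mul_le_mul_of_nonneg_left hsq2 (sq_nonneg _)
  have hmin' : ‖F y + matCLM (J y) dy‖ ^ 2 + ‖F y‖ ^ 2 * ‖matCLM L dy‖ ^ 2 ≤
      (c1 * D ^ 2) ^ 2 + ‖F y‖ ^ 2 * (‖matCLM L‖ * D) ^ 2 :=
    le_trans hmin (add_le_add hsq1 hsq3)
  have hJdF : ‖matCLM (J y) dy‖ ≤ cF * D := le_trans hJd hFyD
  obtain ⟨hndy, haD, hsum⟩ := lm_arith c1 c2 cF γ ‖matCLM L‖ D (‖F y‖ ^ 2)
    (‖F y + matCLM (J y) dy‖) (‖matCLM (J y) dy‖) (‖matCLM L dy‖) (‖dy‖)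
    hc1pos hc2pos hcFpos hγ hDpos (norm_nonneg _) (norm_nonneg _) (norm_nonneg _)
    hlam_lb hlam_ub hmin' hJdF (hcomp y dy)
  refine ⟨hndy, fun hmem => ?_⟩
  have hc1' := hc1 (y + dy) hmem y hy2δ
  rw [add_sub_cancel_left] at hc1'
  have htri : ‖F (y + dy)‖ ≤ ‖F y + matCLM (J y) dy‖ + c1 * ‖dy‖ ^ 2 := by
    have heq : F (y + dy) =
        (F y + matCLM (J y) dy) - (matCLM (J y) dy - (F (y + dy) - F y)) := by abel
    calc ‖F (y + dy)‖
        = ‖(F y + matCLM (J y) dy) - (matCLM (J y) dy - (F (y + dy) - F y))‖ := by rw [← heq]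
      _ ≤ ‖F y + matCLM (J y) dy‖ + ‖matCLM (J y) dy - (F (y + dy) - F y)‖ := norm_sub_le _ _
      _ ≤ ‖F y + matCLM (J y) dy‖ + c1 * ‖dy‖ ^ 2 := by linarith
  have hFstep : ‖F (y + dy)‖ ≤ c2 * (lmC5 c1 c2 cF γ ‖matCLM L‖ * D ^ 2) := by
    have he : c2 * (lmC5 c1 c2 cF γ ‖matCLM L‖ * D ^ 2) =
        (c1 * lmC3 c1 c2 cF γ ‖matCLM L‖ ^ 2 + lmC4 c1 cF ‖matCLM L‖) * D ^ 2 := by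
      rw [lmC5]; field_simp
    rw [he]
    linarith
  have h := hc2 (y + dy) hmem
  have hfin : c2 * infDist (y + dy) {z : EuclideanSpace ℝ (Fin n) | F z = 0} ≤
      c2 * (lmC5 c1 c2 cF γ ‖matCLM L‖ * D ^ 2) := le_trans h hFstep
  exact le_of_mul_le_mul_left hfin hc2pos

/-- under the local assumptions, if the LMMSS sequence with unit steps starts at
`x₀ ∈ B(x*, r)` with `r = min{δ/(2 + 4c₃), 1/(2c₅)}`, then `x_k ∈ B(x*, δ)` for every `k`. -/
theorem lmmss_iterates_stay_in_ball
    (n m p : ℕ)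
    (F : EuclideanSpace ℝ (Fin n) → EuclideanSpace ℝ (Fin m))
    (J : EuclideanSpace ℝ (Fin n) → Matrix (Fin m) (Fin n) ℝ)
    (hdiff : ∀ x, HasFDerivAt F (matCLM (J x)) x)
    (hJcont : Continuous J)
    (hne : ∃ x, F x = 0)
    (xstar : EuclideanSpace ℝ (Fin n)) (hxstar : F xstar = 0)
    (δ : ℝ) (hδ0 : 0 < δ) (hδh : δ < 1 / 2)
    (c1 : ℝ) (hc1pos : 0 < c1)
    (hc1 : ∀ x ∈ closedBall xstar (2 * δ), ∀ y ∈ closedBall xstar (2 * δ),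
      ‖matCLM (J y) (x - y) - (F x - F y)‖ ≤ c1 * ‖x - y‖ ^ 2)
    (cF : ℝ) (hcFpos : 0 < cF)
    (hcF : ∀ x ∈ closedBall xstar (2 * δ), ∀ y ∈ closedBall xstar (2 * δ),
      ‖F x - F y‖ ≤ cF * ‖x - y‖)
    (c2 : ℝ) (hc2pos : 0 < c2)
    (hc2 : ∀ x ∈ closedBall xstar (2 * δ),
      c2 * infDist x {y | F y = 0} ≤ ‖F x‖)
    (L : Matrix (Fin p) (Fin n) ℝ) (γ : ℝ) (hγ : 0 < γ)
    (hcomp : ∀ (x : EuclideanSpace ℝ (Fin n)) (v : EuclideanSpace ℝ (Fin n)),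
      ‖matCLM (J x) v‖ ^ 2 + ‖matCLM L v‖ ^ 2 ≥ γ * ‖v‖ ^ 2)
    (x d : ℕ → EuclideanSpace ℝ (Fin n))
    (hd0 : ∀ k, F (x k) = 0 → d k = 0)
    (hd : ∀ k, F (x k) ≠ 0 →
      matCLM ((J (x k))ᵀ * J (x k) + ‖F (x k)‖ ^ 2 • (Lᵀ * L)) (d k) =
        -(matCLM (J (x k))ᵀ (F (x k))))
    (hstep : ∀ k, x (k + 1) = x k + d k)
    (hx0 : x 0 ∈ closedBall xstar
      (min (δ / (2 + 4 * lmC3 c1 c2 cF γ ‖matCLM L‖))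
        (1 / (2 * lmC5 c1 c2 cF γ ‖matCLM L‖)))) :
    ∀ k, x k ∈ closedBall xstar δ := by
  have hFcont : Continuous F := continuous_iff_continuousAt.mpr fun z => (hdiff z).continuousAt
  have hSclosed : IsClosed {z : EuclideanSpace ℝ (Fin n) | F z = 0} :=
    isClosed_eq hFcont continuous_const
  have hc3nn : 0 ≤ lmC3 c1 c2 cF γ ‖matCLM L‖ := by rw [lmC3]; positivity
  have hc5pos : 0 < lmC5 c1 c2 cF γ ‖matCLM L‖ := by
    rw [lmC5, lmC4]
    have h4 : 0 < Real.sqrt (c1 ^ 2 + cF ^ 2 * ‖matCLM L‖ ^ 2) := Real.sqrt_pos.mpr (by positivity)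
    positivity
  set c3 := lmC3 c1 c2 cF γ ‖matCLM L‖ with hc3def
  set c5 := lmC5 c1 c2 cF γ ‖matCLM L‖ with hc5def
  set r := min (δ / (2 + 4 * c3)) (1 / (2 * c5)) with hrdef
  have hrpos : 0 < r := lt_min (by positivity) (by positivity)
  have hr1 : r ≤ δ / (2 + 4 * c3) := min_le_left _ _
  have hr2 : r ≤ 1 / (2 * c5) := min_le_right _ _
  have hr1' : r * (2 + 4 * c3) ≤ δ :=
    (le_div_iff₀ (by positivity : (0:ℝ) < 2 + 4 * c3)).mp hr1
  have hr_half : r + 2 * c3 * r ≤ δ / 2 := by nlinarith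
  have hc3r : c3 * r ≤ δ / 4 := by nlinarith
  have hc5r : c5 * r ≤ 1 / 2 := by
    have := (le_div_iff₀ (by positivity : (0:ℝ) < 2 * c5)).mp hr2
    nlinarith
  set S := {z : EuclideanSpace ℝ (Fin n) | F z = 0} with hSdef
  have hxstarS : xstar ∈ S := hxstar
  have main : ∀ k, ‖x k - xstar‖ ≤ r + 2 * c3 * r * (1 - (1/2:ℝ)^k) ∧
      infDist (x k) S ≤ (1/2:ℝ)^k * r := by
    intro k
    induction k with
    | zero =>
      constructor
      · have h := mem_closedBall_iff_norm.mp hx0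
        simp only [pow_zero]
        nlinarith [mul_nonneg hc3nn hrpos.le]
      · simp only [pow_zero, one_mul]
        exact le_trans (infDist_le_dist_of_mem hxstarS) (mem_closedBall.mp hx0)
    | succ k ih =>
      obtain ⟨ih1, ih2⟩ := ih
      have hpk : (0:ℝ) < (1/2:ℝ)^k := by positivity
      have hpkle1 : ((1:ℝ)/2)^k ≤ 1 := pow_le_one₀ (by norm_num) (by norm_num)
      have hpp : ((1:ℝ)/2)^(k+1) = (1/2:ℝ)^k * (1/2) := pow_succ _ _
      have h2c3r : 2 * c3 * r * (1 - (1/2:ℝ)^k) ≤ 2 * c3 * r := by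
        nlinarith [mul_nonneg hc3nn hrpos.le]
      have hbound : ‖x k - xstar‖ ≤ δ / 2 := by linarith
      have hDk : infDist (x k) S ≤ r := by nlinarith [ih2]
      have hDknn : 0 ≤ infDist (x k) S := infDist_nonneg
      by_cases hF : F (x k) = 0
      · have hdk : d k = 0 := hd0 k hF
        have hxk1 : x (k+1) = x k := by rw [hstep k, hdk, add_zero]
        constructor
        · rw [hxk1]
          nlinarith [mul_nonneg hc3nn hrpos.le]
        · rw [hxk1, infDist_zero_of_mem (by exact hF : x k ∈ S)]
          positivity
      · obtain ⟨hdb, hstep2⟩ := lm_step F J xstar hxstar δ c1 cF c2 hδ0 hc1pos hcFpos hc2pos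
          hc1 hcF hc2 L γ hγ hcomp hSclosed (x k) (d k) (by linarith) hF (hd k hF)
        rw [← hc3def] at hdb
        rw [← hc5def] at hstep2
        have hdkn : ‖d k‖ ≤ c3 * infDist (x k) S := hdb
        have hxk1n : ‖x (k+1) - xstar‖ ≤ ‖x k - xstar‖ + ‖d k‖ := by
          rw [hstep k]
          have he : x k + d k - xstar = (x k - xstar) + d k := by abel
          rw [he]
          exact norm_add_le _ _
        have hc3D : c3 * infDist (x k) S ≤ c3 * ((1/2:ℝ)^k * r) :=
          mul_le_mul_of_nonneg_left ih2 hc3nn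
        constructor
        · nlinarith [hxk1n, hdkn, hc3D, ih1]
        · have hmem : x (k+1) ∈ closedBall xstar (2 * δ) := by
            rw [mem_closedBall_iff_norm]
            have : c3 * infDist (x k) S ≤ c3 * r := mul_le_mul_of_nonneg_left hDk hc3nn
            linarith
          rw [hstep k] at hmem ⊢
          have hs := hstep2 hmem
          have t2 : c5 * infDist (x k) S ≤ 1/2 := by
            have t1 : c5 * infDist (x k) S ≤ c5 * r := mul_le_mul_of_nonneg_left hDk hc5pos.le
            linarith
          have t4 : c5 * infDist (x k) S ^ 2 ≤ (1/2) * infDist (x k) S := by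
            have := mul_le_mul_of_nonneg_right t2 hDknn
            nlinarith
          have t5 : (1/2:ℝ) * infDist (x k) S ≤ (1/2) * ((1/2:ℝ)^k * r) := by linarith
          calc infDist (x k + d k) S ≤ c5 * infDist (x k) S ^ 2 := hs
            _ ≤ (1/2) * ((1/2:ℝ)^k * r) := le_trans t4 t5
            _ = (1/2:ℝ)^(k+1) * r := by rw [hpp]; ring
  intro k
  obtain ⟨h1, _⟩ := main k
  rw [mem_closedBall_iff_norm]
  have hpk : (0:ℝ) < (1/2:ℝ)^k := by positivity
  have hpkle1 : ((1:ℝ)/2)^k ≤ 1 := pow_le_one₀ (by norm_num) (by norm_num)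
  nlinarith [mul_nonneg hc3nn hrpos.le]
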